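/- Let G be a finite group acting on a finite set X, U = Z[X], and A the augmentation kernel. The G-equivariant map π: ∧²U → A defined by π(x ∧ x') = x - x' is surjective with kernel ∧²A, giving an exact sequence of G-lattices 0 → ∧²A → ∧²U → A → 0. -/

import Mathlib

open Function

section Core
variable (G : Type) [Group G]

/-- A map is `G`-equivariant. -/
def IsEquivMapP {M N : Type} [AddCommGroup M] [AddCommGroup N]
    [DistribMulAction G M] [DistribMulAction G N] (f : M → N) : Prop :=
  ∀ (g : G) (m : M), f (g • m) = g • f m

/-- `M` is a permutation `G`-lattice: it has a finite `ℤ`-basis permuted by `G`. -/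
def IsPermLat (M : Type) [AddCommGroup M] [DistribMulAction G M] : Prop :=
  ∃ (ι : Type) (_ : Fintype ι) (b : Module.Basis ι ℤ M) (σ : G → ι → ι),
    ∀ (g : G) (i : ι), g • (b i : M) = b (σ g i)

/-- `M` is a lattice: finitely generated and free over `ℤ`. -/
def IsLat (M : Type) [AddCommGroup M] : Prop := Module.Free ℤ M ∧ Module.Finite ℤ M

/-- A short exact sequence `0 → M → E → P → 0` of `G`-modules. -/
def ShortExactG (M E P : Type) [AddCommGroup M] [AddCommGroup E] [AddCommGroup P]
    [DistribMulAction G M] [DistribMulAction G E] [DistribMulAction G P] : Prop :=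
  ∃ (i : M →+ E) (p : E →+ P), IsEquivMapP G i ∧ IsEquivMapP G p ∧
    Injective i ∧ Surjective p ∧ i.range = p.ker

/-- Colliot-Thélène–Sansuc equivalence of `G`-lattices. -/
def LatEquiv (M N : Type) [AddCommGroup M] [AddCommGroup N]
    [DistribMulAction G M] [DistribMulAction G N] : Prop :=
  ∃ (E : Type) (_ : AddCommGroup E) (_ : DistribMulAction G E)
    (P : Type) (_ : AddCommGroup P) (_ : DistribMulAction G P)
    (Q : Type) (_ : AddCommGroup Q) (_ : DistribMulAction G Q),
    IsLat E ∧ IsPermLat G P ∧ IsPermLat G Q ∧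
    ShortExactG G M E P ∧ ShortExactG G N E Q

/-- `M` is stably permutation. -/
def IsStablyPerm (M : Type) [AddCommGroup M] [DistribMulAction G M] : Prop :=
  ∃ (P : Type) (_ : AddCommGroup P) (_ : DistribMulAction G P)
    (Q : Type) (_ : AddCommGroup Q) (_ : DistribMulAction G Q),
    IsPermLat G P ∧ IsPermLat G Q ∧
    ∃ e : (M × P) ≃+ Q, IsEquivMapP G e

/-- `M` is permutation projective: a direct summand of a permutation lattice. -/
def IsPermProj (M : Type) [AddCommGroup M] [DistribMulAction G M] : Prop :=
  ∃ (P : Type) (_ : AddCommGroup P) (_ : DistribMulAction G P), IsPermLat G P ∧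
    ∃ (i : M →+ P) (r : P →+ M), IsEquivMapP G i ∧ IsEquivMapP G r ∧ ∀ m, r (i m) = m

/-- `M` is quasi-permutation: it embeds into a permutation lattice with permutation quotient. -/
def IsQuasiPerm (M : Type) [AddCommGroup M] [DistribMulAction G M] : Prop :=
  ∃ (P : Type) (_ : AddCommGroup P) (_ : DistribMulAction G P)
    (Q : Type) (_ : AddCommGroup Q) (_ : DistribMulAction G Q),
    IsPermLat G P ∧ IsPermLat G Q ∧ ShortExactG G M P Q

variable (M : Type) [AddCommGroup M] [DistribMulAction G M]

/-- 1-cocycles. -/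
def Z1 : AddSubgroup (G → M) where
  carrier := {f | ∀ g h : G, f (g * h) = g • f h + f g}
  zero_mem' := by intro g h; simp
  add_mem' := by
    intro f f' hf hf' g h
    simp only [Pi.add_apply, hf g h, hf' g h, smul_add]; abel
  neg_mem' := by
    intro f hf g h
    simp only [Pi.neg_apply, hf g h, smul_neg]; abel

/-- The coboundary homomorphism. -/
def coboundHom : M →+ Z1 G M where
  toFun m := ⟨fun g => g • m - m, by intro g h; simp only [mul_smul, smul_sub]; abel⟩
  map_zero' := by apply Subtype.ext; funext g; simp
  map_add' := by
    intro a b; apply Subtype.ext; funext g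
    show g • (a + b) - (a + b) = (g • a - a) + (g • b - b)
    simp only [smul_add]; abel

/-- 1-coboundaries. -/
def B1 : AddSubgroup (Z1 G M) := (coboundHom G M).range

/-- First group cohomology `H¹(G, M)`. -/
abbrev H1 := Z1 G M ⧸ B1 G M

/-- Restriction of cocycles to a subgroup. -/
def resZ1 (H : Subgroup G) : Z1 G M →+ Z1 H M where
  toFun f := ⟨fun h => f.1 h, by
    intro a b
    have := f.2 (a : G) (b : G)
    exact this⟩
  map_zero' := rfl
  map_add' := fun _ _ => rfl

/-- Restriction on `H¹`. -/
def resH1 (H : Subgroup G) : H1 G M →+ H1 H M :=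
  QuotientAddGroup.map _ _ (resZ1 G M H) (by
    rintro _ ⟨m, rfl⟩
    exact ⟨m, Subtype.ext rfl⟩)

/-- `Ш¹(G, M)`. -/
def Sha1 : AddSubgroup (H1 G M) :=
  ⨅ g : G, (resH1 G M (Subgroup.zpowers g)).ker

/-- `M` is coflasque: `H¹(H, M) = 0` for all subgroups `H ≤ G`. -/
def IsCoflasque : Prop := ∀ H : Subgroup G, ∀ x y : H1 H M, x = y

end Core

section Core2
variable (G : Type) [Group G] (M : Type) [AddCommGroup M] [DistribMulAction G M]

/-- 2-cocycles. -/
def Z2 : AddSubgroup (G → G → M) where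
  carrier := {f | ∀ g h k : G, g • f h k - f (g * h) k + f g (h * k) - f g h = 0}
  zero_mem' := by intro g h k; simp
  add_mem' := by
    intro f f' hf hf' g h k
    have h1 := hf g h k; have h2 := hf' g h k
    simp only [Pi.add_apply, smul_add]
    calc g • f h k + g • f' h k - (f (g * h) k + f' (g * h) k) +
          (f g (h * k) + f' g (h * k)) - (f g h + f' g h)
        = (g • f h k - f (g * h) k + f g (h * k) - f g h) +
          (g • f' h k - f' (g * h) k + f' g (h * k) - f' g h) := by abel
      _ = 0 := by rw [h1, h2, add_zero]
  neg_mem' := by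
    intro f hf g h k
    have h1 := hf g h k
    simp only [Pi.neg_apply, smul_neg]
    calc -(g • f h k) - -f (g * h) k + -f g (h * k) - -f g h
        = -(g • f h k - f (g * h) k + f g (h * k) - f g h) := by abel
      _ = 0 := by rw [h1, neg_zero]

/-- The 2-coboundary homomorphism. -/
def cobound2Hom : (G → M) →+ Z2 G M where
  toFun u := ⟨fun g h => g • u h - u (g * h) + u g, by
    intro g h k
    simp only [mul_smul, smul_sub, smul_add, mul_assoc]
    abel⟩
  map_zero' := by apply Subtype.ext; funext g h; simp
  map_add' := by
    intro a b; apply Subtype.ext; funext g h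
    show g • (a h + b h) - (a (g * h) + b (g * h)) + (a g + b g)
        = (g • a h - a (g * h) + a g) + (g • b h - b (g * h) + b g)
    simp only [smul_add]; abel

/-- 2-coboundaries. -/
def B2 : AddSubgroup (Z2 G M) := (cobound2Hom G M).range

/-- Second group cohomology `H²(G, M)`. -/
abbrev H2 := Z2 G M ⧸ B2 G M

/-- Restriction of 2-cocycles to a subgroup. -/
def resZ2 (H : Subgroup G) : Z2 G M →+ Z2 H M where
  toFun f := ⟨fun a b => f.1 a b, by
    intro a b c
    have := f.2 (a : G) (b : G) (c : G)
    exact this⟩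
  map_zero' := rfl
  map_add' := fun _ _ => rfl

/-- Restriction on `H²`. -/
def resH2 (H : Subgroup G) : H2 G M →+ H2 H M :=
  QuotientAddGroup.map _ _ (resZ2 G M H) (by
    rintro _ ⟨u, rfl⟩
    exact ⟨fun h : H => u (h : G), Subtype.ext rfl⟩)

/-- `Ш²(G, M)`. -/
def Sha2 : AddSubgroup (H2 G M) :=
  ⨅ g : G, (resH2 G M (Subgroup.zpowers g)).ker

/-- The subgroup `2M`. -/
def twoSub : AddSubgroup M :=
  (AddMonoidHom.mk' (fun m : M => (2 : ℤ) • m) (by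
    intro a b
    show (2 : ℤ) • (a + b) = (2 : ℤ) • a + (2 : ℤ) • b
    rw [smul_add])).range

/-- `M/2M`. -/
abbrev ModTwo := M ⧸ twoSub M

noncomputable instance : SMul G (ModTwo M) :=
  ⟨fun g => QuotientAddGroup.map _ _ (DistribMulAction.toAddMonoidHom M g) (by
    rintro _ ⟨m, rfl⟩
    refine ⟨g • m, ?_⟩
    show (2 : ℤ) • (g • m) = g • ((2 : ℤ) • m)
    rw [smul_comm])⟩

theorem modTwo_smul_mk (g : G) (m : M) :
    g • (QuotientAddGroup.mk m : ModTwo M) = QuotientAddGroup.mk (g • m) := rfl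

noncomputable instance : DistribMulAction G (ModTwo M) where
  one_smul x := by
    obtain ⟨m, rfl⟩ := QuotientAddGroup.mk_surjective x
    rw [modTwo_smul_mk, one_smul]
  mul_smul g h x := by
    obtain ⟨m, rfl⟩ := QuotientAddGroup.mk_surjective x
    rw [modTwo_smul_mk, modTwo_smul_mk, modTwo_smul_mk, mul_smul]
  smul_zero g := map_zero (QuotientAddGroup.map _ _ (DistribMulAction.toAddMonoidHom M g) _)
  smul_add g x y := map_add (QuotientAddGroup.map _ _ (DistribMulAction.toAddMonoidHom M g) _) x y

variable [Finite G]

/-- Kernel of the norm map (for a finite group). -/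
def normKer : AddSubgroup M where
  carrier := {x | ∑ᶠ g : G, g • x = 0}
  zero_mem' := by simp
  add_mem' := by
    intro x y hx hy
    have hx' : ∑ᶠ g : G, g • x = 0 := hx
    have hy' : ∑ᶠ g : G, g • y = 0 := hy
    show ∑ᶠ g : G, g • (x + y) = 0
    simp only [smul_add]
    rw [finsum_add_distrib (Set.toFinite _) (Set.toFinite _), hx', hy', add_zero]
  neg_mem' := by
    intro x hx
    have hx' : ∑ᶠ g : G, g • x = 0 := hx
    show ∑ᶠ g : G, g • (-x) = 0
    simp only [smul_neg]
    rw [finsum_neg_distrib, hx', neg_zero]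

/-- The subgroup generated by elements `g • m - m`. -/
def augSub : AddSubgroup M := AddSubgroup.closure {x | ∃ (g : G) (m : M), x = g • m - m}

/-- Tate cohomology `Ĥ⁻¹(G, M)` (for a finite group `G`). -/
abbrev TateNeg1 := normKer G M ⧸ ((augSub G M).addSubgroupOf (normKer G M))

/-- `M` is flasque: `Ĥ⁻¹(H, M) = 0` for all subgroups `H ≤ G`. -/
def IsFlasque : Prop := ∀ H : Subgroup G, ∀ x y : TateNeg1 H M, x = y

end Core2

section Core3
variable (G : Type) [Group G]

/-- `M` is equivalent to a direct summand of a quasi-permutation `G`-lattice. -/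
def IsEquivSummandQP (M : Type) [AddCommGroup M] [DistribMulAction G M] : Prop :=
  ∃ (S : Type) (_ : AddCommGroup S) (_ : DistribMulAction G S)
    (D : Type) (_ : AddCommGroup D) (_ : DistribMulAction G D)
    (D' : Type) (_ : AddCommGroup D') (_ : DistribMulAction G D'),
    IsLat S ∧ IsQuasiPerm G S ∧ (∃ e : (D × D') ≃+ S, IsEquivMapP G e) ∧
    LatEquiv G M D

end Core3

section Tensor
open TensorProduct
variable (G : Type) [Group G] (M : Type) [AddCommGroup M] [DistribMulAction G M]

/-- The action of `g : G` as a `ℤ`-linear map. -/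
def gLin (g : G) : M →ₗ[ℤ] M := (DistribMulAction.toAddMonoidHom M g).toIntLinearMap

noncomputable instance tensorSMul : SMul G (M ⊗[ℤ] M) :=
  ⟨fun g => TensorProduct.map (gLin G M g) (gLin G M g)⟩

theorem tsmul_def (g : G) (x : M ⊗[ℤ] M) :
    g • x = TensorProduct.map (gLin G M g) (gLin G M g) x := rfl

theorem gLin_one : gLin G M 1 = LinearMap.id := by
  ext m; show (1 : G) • m = m; rw [one_smul]

theorem gLin_mul (g h : G) : gLin G M (g * h) = (gLin G M g).comp (gLin G M h) := by
  ext m; show (g * h) • m = g • h • m; rw [mul_smul]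

noncomputable instance tensorAct : DistribMulAction G (M ⊗[ℤ] M) where
  one_smul x := by rw [tsmul_def, gLin_one, TensorProduct.map_id]; rfl
  mul_smul g h x := by
    rw [tsmul_def, tsmul_def, tsmul_def, gLin_mul, TensorProduct.map_comp]; rfl
  smul_zero g := map_zero _
  smul_add g x y := map_add _ x y

/-- Generators of the symmetric relation. -/
def symSpan : Submodule ℤ (M ⊗[ℤ] M) :=
  Submodule.span ℤ {x | ∃ a b : M, x = a ⊗ₜ[ℤ] b - b ⊗ₜ[ℤ] a}

/-- Generators of the wedge relation. -/
def wedSpan : Submodule ℤ (M ⊗[ℤ] M) :=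
  Submodule.span ℤ {x | ∃ a : M, x = a ⊗ₜ[ℤ] a}

/-- The second symmetric power `Sym²M`. -/
abbrev Sym2Q := (M ⊗[ℤ] M) ⧸ symSpan M

/-- The second exterior power `∧²M`. -/
abbrev Wedge2Q := (M ⊗[ℤ] M) ⧸ wedSpan M

theorem symSpan_le_comap (g : G) :
    symSpan M ≤ (symSpan M).comap (TensorProduct.map (gLin G M g) (gLin G M g)) := by
  refine Submodule.span_le.2 ?_
  rintro _ ⟨a, b, rfl⟩
  show TensorProduct.map (gLin G M g) (gLin G M g) (a ⊗ₜ[ℤ] b - b ⊗ₜ[ℤ] a) ∈ symSpan M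
  rw [map_sub, TensorProduct.map_tmul, TensorProduct.map_tmul]
  exact Submodule.subset_span ⟨g • a, g • b, rfl⟩

theorem wedSpan_le_comap (g : G) :
    wedSpan M ≤ (wedSpan M).comap (TensorProduct.map (gLin G M g) (gLin G M g)) := by
  refine Submodule.span_le.2 ?_
  rintro _ ⟨a, rfl⟩
  show TensorProduct.map (gLin G M g) (gLin G M g) (a ⊗ₜ[ℤ] a) ∈ wedSpan M
  rw [TensorProduct.map_tmul]
  exact Submodule.subset_span ⟨g • a, rfl⟩

noncomputable instance sym2SMul : SMul G (Sym2Q M) :=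
  ⟨fun g => Submodule.mapQ _ _ (TensorProduct.map (gLin G M g) (gLin G M g))
    (symSpan_le_comap G M g)⟩

noncomputable instance wedge2SMul : SMul G (Wedge2Q M) :=
  ⟨fun g => Submodule.mapQ _ _ (TensorProduct.map (gLin G M g) (gLin G M g))
    (wedSpan_le_comap G M g)⟩

theorem sym2_smul_mk (g : G) (x : M ⊗[ℤ] M) :
    g • ((symSpan M).mkQ x) = (symSpan M).mkQ (g • x) :=
  Submodule.mapQ_apply _ _ _ _

theorem wedge2_smul_mk (g : G) (x : M ⊗[ℤ] M) :
    g • ((wedSpan M).mkQ x) = (wedSpan M).mkQ (g • x) :=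
  Submodule.mapQ_apply _ _ _ _

noncomputable instance sym2Act : DistribMulAction G (Sym2Q M) where
  one_smul x := by
    obtain ⟨y, rfl⟩ := (symSpan M).mkQ_surjective x
    rw [sym2_smul_mk, one_smul]
  mul_smul g h x := by
    obtain ⟨y, rfl⟩ := (symSpan M).mkQ_surjective x
    rw [sym2_smul_mk, sym2_smul_mk, sym2_smul_mk, mul_smul]
  smul_zero g := by
    have := sym2_smul_mk G M g 0
    simpa using this
  smul_add g x y := by
    obtain ⟨a, rfl⟩ := (symSpan M).mkQ_surjective x
    obtain ⟨b, rfl⟩ := (symSpan M).mkQ_surjective y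
    rw [← map_add, sym2_smul_mk, sym2_smul_mk, sym2_smul_mk, smul_add, map_add]

noncomputable instance wedge2Act : DistribMulAction G (Wedge2Q M) where
  one_smul x := by
    obtain ⟨y, rfl⟩ := (wedSpan M).mkQ_surjective x
    rw [wedge2_smul_mk, one_smul]
  mul_smul g h x := by
    obtain ⟨y, rfl⟩ := (wedSpan M).mkQ_surjective x
    rw [wedge2_smul_mk, wedge2_smul_mk, wedge2_smul_mk, mul_smul]
  smul_zero g := by
    have := wedge2_smul_mk G M g 0
    simpa using this
  smul_add g x y := by
    obtain ⟨a, rfl⟩ := (wedSpan M).mkQ_surjective x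
    obtain ⟨b, rfl⟩ := (wedSpan M).mkQ_surjective y
    rw [← map_add, wedge2_smul_mk, wedge2_smul_mk, wedge2_smul_mk, smul_add, map_add]

variable {M} {N : Type} [AddCommGroup N]

/-- The map `Sym²f` induced by a linear map `f`. -/
noncomputable def sym2Map (f : M →ₗ[ℤ] N) : Sym2Q M →ₗ[ℤ] Sym2Q N :=
  Submodule.mapQ _ _ (TensorProduct.map f f) (by
    refine Submodule.span_le.2 ?_
    rintro _ ⟨a, b, rfl⟩
    show TensorProduct.map f f (a ⊗ₜ[ℤ] b - b ⊗ₜ[ℤ] a) ∈ symSpan N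
    rw [map_sub, TensorProduct.map_tmul, TensorProduct.map_tmul]
    exact Submodule.subset_span ⟨f a, f b, rfl⟩)

/-- The map `∧²f` induced by a linear map `f`. -/
noncomputable def wedge2Map (f : M →ₗ[ℤ] N) : Wedge2Q M →ₗ[ℤ] Wedge2Q N :=
  Submodule.mapQ _ _ (TensorProduct.map f f) (by
    refine Submodule.span_le.2 ?_
    rintro _ ⟨a, rfl⟩
    show TensorProduct.map f f (a ⊗ₜ[ℤ] a) ∈ wedSpan N
    rw [TensorProduct.map_tmul]
    exact Submodule.subset_span ⟨f a, rfl⟩)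

end Tensor

section PermMod
variable (G : Type) [Group G] (X : Type) [MulAction G X]

/-- The permutation action on `ℤ[X] = X → ℤ`. -/
instance permSMul : SMul G (X → ℤ) := ⟨fun g f x => f (g⁻¹ • x)⟩

theorem perm_smul_def (g : G) (f : X → ℤ) (x : X) : (g • f) x = f (g⁻¹ • x) := rfl

instance permAct : DistribMulAction G (X → ℤ) where
  one_smul f := funext fun x => by rw [perm_smul_def, inv_one, one_smul]
  mul_smul g h f := funext fun x => by
    rw [perm_smul_def, perm_smul_def, perm_smul_def, mul_inv_rev, mul_smul]
  smul_zero g := rfl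
  smul_add g f f' := rfl

variable [Fintype X]

/-- The augmentation kernel `A = ker(ℤ[X] → ℤ)`. -/
def augKer : AddSubgroup (X → ℤ) where
  carrier := {f | ∑ x, f x = 0}
  zero_mem' := by simp
  add_mem' := by
    intro a b ha hb
    have ha' : ∑ x, a x = 0 := ha
    have hb' : ∑ x, b x = 0 := hb
    show ∑ x, (a x + b x) = 0
    rw [Finset.sum_add_distrib, ha', hb', add_zero]
  neg_mem' := by
    intro a ha
    have ha' : ∑ x, a x = 0 := ha
    show ∑ x, (-(a x)) = 0
    rw [Finset.sum_neg_distrib, ha', neg_zero]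

theorem smul_mem_augKer (g : G) (f : X → ℤ) (hf : f ∈ augKer X) :
    g • f ∈ augKer X := by
  have hf' : ∑ x, f x = 0 := hf
  show ∑ x, f (g⁻¹ • x) = 0
  exact (Equiv.sum_comp (MulAction.toPerm (g⁻¹ : G)) f).trans hf'

instance augKerSMul : SMul G (augKer X) :=
  ⟨fun g f => ⟨g • (f : X → ℤ), smul_mem_augKer G X g f f.2⟩⟩

theorem augKer_smul_def (g : G) (f : augKer X) :
    ((g • f : augKer X) : X → ℤ) = g • (f : X → ℤ) := rfl

instance augKerAct : DistribMulAction G (augKer X) where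
  one_smul f := Subtype.ext (by rw [augKer_smul_def, one_smul])
  mul_smul g h f := Subtype.ext (by
    rw [augKer_smul_def, augKer_smul_def, augKer_smul_def, mul_smul])
  smul_zero g := Subtype.ext (by
    rw [augKer_smul_def]
    show g • (0 : X → ℤ) = 0
    rw [smul_zero])
  smul_add g f f' := Subtype.ext (by
    show g • ((f : X → ℤ) + f') = g • (f : X → ℤ) + g • (f' : X → ℤ)
    rw [smul_add])

end PermMod

section P2sec
variable (G : Type) [Group G]

/-- The set of 2-element subsets of `X`. -/
def P2 (X : Type) [DecidableEq X] : Type := {s : Finset X // s.card = 2}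

noncomputable instance (X : Type) [DecidableEq X] [Fintype X] : Fintype (P2 X) := by
  unfold P2; infer_instance

instance p2SMul (X : Type) [DecidableEq X] [MulAction G X] : SMul G (P2 X) :=
  ⟨fun g s => ⟨s.1.image (fun x => g • x), by
    rw [Finset.card_image_of_injective _ (MulAction.injective g)]; exact s.2⟩⟩

theorem p2_smul_def (X : Type) [DecidableEq X] [MulAction G X] (g : G) (s : P2 X) :
    (g • s).1 = s.1.image (fun x => g • x) := rfl

instance p2Act (X : Type) [DecidableEq X] [MulAction G X] : MulAction G (P2 X) where
  one_smul s := Subtype.ext (by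
    rw [p2_smul_def]
    simp)
  mul_smul g h s := Subtype.ext (by
    simp only [p2_smul_def, Finset.image_image]
    refine Finset.image_congr ?_
    intro x _
    exact mul_smul g h x)

end P2sec

/-- The root lattice `A_{n-1}` as an `S_n`-lattice. -/
abbrev rootLat (n : ℕ) := augKer (Fin n)


/-- The element `x - x'` of the augmentation kernel. -/
def diffElt (X : Type) [Fintype X] [DecidableEq X] (x x' : X) : augKer X :=
  ⟨Pi.single x (1 : ℤ) - Pi.single x' (1 : ℤ), by
    have h : ∑ y, ((Pi.single x (1 : ℤ) : X → ℤ) y - (Pi.single x' (1 : ℤ) : X → ℤ) y) = 0 := by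
      rw [Finset.sum_sub_distrib]; simp
    exact h⟩

/-! Fix a point `x₀ ∈ X` and put `e = x₀`, so that `ε e = 1`. Then `r u = u - ε(u) e` retracts
`U` onto `A`, hence `∧²A → ∧²U` is split injective. The map `π` is forced to be the contraction
`u ∧ v ↦ ε(v) u - ε(u) v` (the two agree on the basis wedges `x ∧ x'`), which sends `a ∧ e` to `a`
for `a ∈ A`. Finally, expanding `r u ∧ r v` gives `∧²r (w) = w - π(w) ∧ e` inside `∧²U`, so every
`w ∈ ker π` lies in `∧²A`. -/

open TensorProduct

section Wedge2
variable {M N P : Type} [AddCommGroup M] [AddCommGroup N] [AddCommGroup P]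

theorem wedge2_mk_tmul_swap (a b : M) :
    (wedSpan M).mkQ (b ⊗ₜ[ℤ] a) = -(wedSpan M).mkQ (a ⊗ₜ[ℤ] b) := by
  rw [eq_neg_iff_add_eq_zero, ← map_add, Submodule.mkQ_apply, Submodule.Quotient.mk_eq_zero]
  have hpol : b ⊗ₜ[ℤ] a + a ⊗ₜ[ℤ] b = (a + b) ⊗ₜ[ℤ] (a + b) - a ⊗ₜ[ℤ] a - b ⊗ₜ[ℤ] b := by
    simp only [add_tmul, tmul_add]; abel
  rw [hpol]
  exact sub_mem (sub_mem (Submodule.subset_span ⟨a + b, rfl⟩) (Submodule.subset_span ⟨a, rfl⟩))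
    (Submodule.subset_span ⟨b, rfl⟩)

theorem wedge2_mk_tmul_self (a : M) : (wedSpan M).mkQ (a ⊗ₜ[ℤ] a) = 0 :=
  (Submodule.Quotient.mk_eq_zero _).2 (Submodule.subset_span ⟨a, rfl⟩)

theorem wedge2Map_mk (f : M →ₗ[ℤ] N) (t : M ⊗[ℤ] M) :
    wedge2Map f ((wedSpan M).mkQ t) = (wedSpan N).mkQ (TensorProduct.map f f t) :=
  Submodule.mapQ_apply _ _ _ _

@[elab_as_elim]
theorem wedge2_induction {p : Wedge2Q M → Prop} (z : Wedge2Q M)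
    (tmul : ∀ a b : M, p ((wedSpan M).mkQ (a ⊗ₜ[ℤ] b))) (add : ∀ z w, p z → p w → p (z + w)) :
    p z := by
  obtain ⟨t, rfl⟩ := (wedSpan M).mkQ_surjective z
  induction t using TensorProduct.induction_on with
  | zero => simpa using tmul 0 0
  | tmul a b => exact tmul a b
  | add t t' ht ht' => rw [map_add]; exact add _ _ ht ht'

theorem wedge2Map_id : wedge2Map (LinearMap.id : M →ₗ[ℤ] M) = LinearMap.id := by
  refine LinearMap.ext fun z => ?_
  induction z using wedge2_induction with
  | tmul a b => rw [wedge2Map_mk, map_tmul]; rfl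
  | add z w hz hw => rw [map_add, map_add, hz, hw]

theorem wedge2Map_comp (f : N →ₗ[ℤ] P) (g : M →ₗ[ℤ] N) :
    wedge2Map (f ∘ₗ g) = wedge2Map f ∘ₗ wedge2Map g := by
  refine LinearMap.ext fun z => ?_
  induction z using wedge2_induction with
  | tmul a b => simp only [LinearMap.comp_apply, wedge2Map_mk, map_tmul]
  | add z w hz hw => rw [map_add, map_add, hz, hw]

theorem wedge2Map_injective_of_leftInverse {f : M →ₗ[ℤ] N} {r : N →ₗ[ℤ] M}
    (h : Function.LeftInverse r f) : Function.Injective (wedge2Map f) := by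
  refine Function.LeftInverse.injective (g := wedge2Map r) fun z => ?_
  rw [← LinearMap.comp_apply, ← wedge2Map_comp, show r ∘ₗ f = LinearMap.id from LinearMap.ext h,
    wedge2Map_id, LinearMap.id_apply]

theorem wedge2_addMonoidHom_ext {T : Type} [AddCommGroup T] {S : Set M}
    (hS : AddSubgroup.closure S = ⊤) {f g : Wedge2Q M →+ T}
    (h : ∀ a ∈ S, ∀ b ∈ S, f ((wedSpan M).mkQ (a ⊗ₜ[ℤ] b)) = g ((wedSpan M).mkQ (a ⊗ₜ[ℤ] b))) :
    f = g := by
  have htmul : ∀ a b : M, f ((wedSpan M).mkQ (a ⊗ₜ[ℤ] b)) = g ((wedSpan M).mkQ (a ⊗ₜ[ℤ] b)) := by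
    intro a b
    induction (hS ▸ AddSubgroup.mem_top a : a ∈ AddSubgroup.closure S) using
      AddSubgroup.closure_induction generalizing b with
    | mem a ha =>
      induction (hS ▸ AddSubgroup.mem_top b : b ∈ AddSubgroup.closure S) using
        AddSubgroup.closure_induction with
      | mem b hb => exact h a ha b hb
      | zero => simp
      | add b b' _ _ hb hb' => simp only [tmul_add, map_add, hb, hb']
      | neg b _ hb => simp only [tmul_neg, map_neg, hb]
    | zero => simp
    | add a a' _ _ ha ha' => simp only [add_tmul, map_add, ha, ha']
    | neg a _ ha => simp only [neg_tmul, map_neg, ha]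
  ext z
  induction z using wedge2_induction with
  | tmul a b => exact htmul a b
  | add z w hz hw => rw [map_add, map_add, hz, hw]

end Wedge2

section Contraction
variable {M : Type} [AddCommGroup M] (ε : M →+ ℤ)

noncomputable def contraction : Wedge2Q M →ₗ[ℤ] M :=
  (wedSpan M).liftQ
    (TensorProduct.lift (LinearMap.mk₂ ℤ (fun u v => ε v • u - ε u • v)
      (fun u u' v => by simp only [map_add, add_smul, smul_add]; abel)
      (fun c u v => by simp only [map_zsmul, smul_eq_mul, smul_sub, mul_smul, smul_comm c (ε v)])
      (fun u v v' => by simp only [map_add, add_smul, smul_add]; abel)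
      (fun c u v => by simp only [map_zsmul, smul_eq_mul, smul_sub, mul_smul, smul_comm c (ε u)])))
    (Submodule.span_le.2 <| by
      rintro _ ⟨a, rfl⟩
      exact (sub_self (ε a • a) : _))

theorem contraction_mk_tmul (a b : M) :
    contraction ε ((wedSpan M).mkQ (a ⊗ₜ[ℤ] b)) = ε b • a - ε a • b :=
  rfl

theorem contraction_smul {G : Type} [Group G] [DistribMulAction G M]
    (hε : ∀ (g : G) (m : M), ε (g • m) = ε m) (g : G) (z : Wedge2Q M) :
    contraction ε (g • z) = g • contraction ε z := by
  induction z using wedge2_induction with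
  | tmul a b =>
    rw [wedge2_smul_mk, tsmul_def, map_tmul]
    simp only [contraction_mk_tmul, gLin, AddMonoidHom.coe_toIntLinearMap,
      DistribMulAction.toAddMonoidHom_apply, hε, smul_sub, smul_comm g]
  | add z w hz hw => rw [smul_add, map_add, map_add, hz, hw, smul_add]

theorem contraction_mk_tmul_of_eq_one {a e : M} (ha : ε a = 0) (he : ε e = 1) :
    contraction ε ((wedSpan M).mkQ (a ⊗ₜ[ℤ] e)) = a := by
  rw [contraction_mk_tmul, ha, he, one_smul, zero_smul, sub_zero]

variable (K : AddSubgroup M)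

theorem contraction_wedge2Map_subtype (hK : K ≤ ε.ker) (z : Wedge2Q K) :
    contraction ε (wedge2Map K.subtype.toIntLinearMap z) = 0 := by
  induction z using wedge2_induction with
  | tmul a b =>
    rw [wedge2Map_mk, map_tmul, contraction_mk_tmul]
    simp only [AddMonoidHom.coe_toIntLinearMap, AddSubgroup.subtype_apply,
      AddMonoidHom.mem_ker.1 (hK a.2), AddMonoidHom.mem_ker.1 (hK b.2), zero_smul, sub_self]
  | add z w hz hw => rw [map_add, map_add, hz, hw, add_zero]

variable {ε K} {e : M}

def retraction (he : ε e = 1) (hK : ε.ker ≤ K) : M →+ K :=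
  (AddMonoidHom.id M - (zmultiplesHom M e).comp ε).codRestrict K fun u => hK <| by
    simp [he]

theorem coe_retraction (he : ε e = 1) (hK : ε.ker ≤ K) (u : M) :
    (retraction he hK u : M) = u - ε u • e :=
  rfl

theorem leftInverse_retraction_subtype (he : ε e = 1) (hK : K = ε.ker) :
    Function.LeftInverse (retraction he hK.ge) K.subtype := fun a =>
  Subtype.ext <| by
    rw [coe_retraction, AddSubgroup.subtype_apply, AddMonoidHom.mem_ker.1 (hK ▸ a.2), zero_smul,
      sub_zero]

theorem wedge2Map_subtype_retraction (he : ε e = 1) (hK : ε.ker ≤ K) (z : Wedge2Q M) :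
    wedge2Map K.subtype.toIntLinearMap (wedge2Map (retraction he hK).toIntLinearMap z) =
      z - (wedSpan M).mkQ (contraction ε z ⊗ₜ[ℤ] e) := by
  induction z using wedge2_induction with
  | tmul a b =>
    rw [wedge2Map_mk, map_tmul, wedge2Map_mk, map_tmul]
    simp only [AddMonoidHom.coe_toIntLinearMap, AddSubgroup.subtype_apply, coe_retraction,
      contraction_mk_tmul, sub_tmul, tmul_sub, ← smul_tmul', tmul_smul, map_sub, map_zsmul,
      wedge2_mk_tmul_self, smul_zero]
    rw [wedge2_mk_tmul_swap b e]
    module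
  | add z w hz hw => rw [map_add, map_add, map_add, hz, hw, add_tmul, map_add]; abel

theorem ker_contraction (he : ε e = 1) (hK : K = ε.ker) :
    LinearMap.ker (contraction ε) = LinearMap.range (wedge2Map K.subtype.toIntLinearMap) := by
  apply le_antisymm
  · intro z hz
    refine ⟨wedge2Map (retraction he hK.ge).toIntLinearMap z, ?_⟩
    rw [wedge2Map_subtype_retraction, LinearMap.mem_ker.1 hz, zero_tmul, map_zero, sub_zero]
  · rintro _ ⟨z, rfl⟩
    exact contraction_wedge2Map_subtype ε K hK.le z

end Contraction

section Augmentation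
variable (X : Type) [Fintype X]

def augmentation : (X → ℤ) →+ ℤ :=
  AddMonoidHom.mk' (fun f => ∑ x, f x) fun _ _ => Finset.sum_add_distrib

theorem augKer_eq_ker_augmentation : augKer X = (augmentation X).ker :=
  AddSubgroup.ext fun _ => Iff.rfl

variable {X}

theorem augmentation_smul {G : Type} [Group G] [MulAction G X] (g : G) (f : X → ℤ) :
    augmentation X (g • f) = augmentation X f :=
  Equiv.sum_comp (MulAction.toPerm g⁻¹) f

variable [DecidableEq X]

theorem augmentation_single (x : X) : augmentation X (Pi.single x 1) = 1 := by
  simp [augmentation]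

theorem closure_range_single_one :
    AddSubgroup.closure (Set.range fun x : X => (Pi.single x 1 : X → ℤ)) = ⊤ := by
  refine eq_top_iff.2 fun f _ => ?_
  rw [← Finset.univ_sum_single f]
  refine AddSubgroup.sum_mem _ fun x _ => ?_
  have hsingle : Pi.single x (f x) = f x • (Pi.single x 1 : X → ℤ) := by
    ext y; by_cases h : y = x <;> simp [h]
  rw [hsingle]
  exact zsmul_mem (AddSubgroup.subset_closure (Set.mem_range_self x)) _

theorem coe_eq_contraction_augmentation (π : Wedge2Q (X → ℤ) →+ augKer X)
    (hπ : ∀ x x' : X, π ((wedSpan (X → ℤ)).mkQ (Pi.single x 1 ⊗ₜ[ℤ] Pi.single x' 1)) =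
        diffElt X x x')
    (z : Wedge2Q (X → ℤ)) : (π z : X → ℤ) = contraction (augmentation X) z := by
  refine DFunLike.congr_fun (wedge2_addMonoidHom_ext (f := (augKer X).subtype.comp π)
    (g := (contraction (augmentation X)).toAddMonoidHom) closure_range_single_one ?_) z
  rintro _ ⟨x, rfl⟩ _ ⟨x', rfl⟩
  simp only [AddMonoidHom.comp_apply, AddSubgroup.subtype_apply, LinearMap.toAddMonoidHom_coe, hπ,
    contraction_mk_tmul, augmentation_single, one_smul]
  rfl

end Augmentation

open TensorProduct in
theorem stmt_8 (G : Type) [Group G] (X : Type) [MulAction G X] [Fintype X] [DecidableEq X]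
    (π : Wedge2Q (X → ℤ) →+ (augKer X))
    (hπ : ∀ x x' : X, π ((wedSpan (X → ℤ)).mkQ (Pi.single x 1 ⊗ₜ[ℤ] Pi.single x' 1)) =
        diffElt X x x') :
    IsEquivMapP G π ∧ Function.Surjective π ∧
    Function.Injective (wedge2Map ((augKer X).subtype.toIntLinearMap)) ∧
    ((wedge2Map ((augKer X).subtype.toIntLinearMap)).toAddMonoidHom).range = π.ker := by
  have hπε := coe_eq_contraction_augmentation π hπ
  have hequiv : IsEquivMapP G π := fun g z => Subtype.ext <| by
    rw [hπε, contraction_smul _ augmentation_smul, augKer_smul_def, hπε]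
  rcases isEmpty_or_nonempty X with _ | ⟨⟨x₀⟩⟩
  · exact ⟨hequiv, fun _ => ⟨0, Subsingleton.elim _ _⟩, fun _ _ _ => Subsingleton.elim _ _,
      Subsingleton.elim _ _⟩
  have he := augmentation_single x₀
  have hK := augKer_eq_ker_augmentation X
  refine ⟨hequiv, fun a =>
    ⟨(wedSpan (X → ℤ)).mkQ ((a : X → ℤ) ⊗ₜ[ℤ] Pi.single x₀ 1), Subtype.ext ?_⟩,
    wedge2Map_injective_of_leftInverse (r := (retraction he hK.ge).toIntLinearMap)
      (leftInverse_retraction_subtype he hK), ?_⟩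
  · rw [hπε, contraction_mk_tmul_of_eq_one _ (AddMonoidHom.mem_ker.1 (hK ▸ a.2)) he]
  · ext z
    rw [AddMonoidHom.mem_ker, ← Subtype.coe_inj, hπε, AddSubgroup.coe_zero, ← LinearMap.mem_ker,
      ker_contraction he hK]
    rfl
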